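/- (Dissipative properties of the high-loss spectrum) Suppose β > 2·ω_max/b_min. Then every ζ ∈ σ(A(β)) satisfies either −Im ζ ≤ ω_max or −Im ζ ≥ β·b_min − ω_max, and β·b_min − ω_max > ω_max. Moreover, for every ζ ∈ σ(A(β)) with −Im ζ ≥ β·b_min − ω_max, the quality factor Q(ζ) = ½·|Re ζ|/(−Im ζ) satisfies 0 ≤ Q(ζ) ≤ ½·ω_max/(β·b_min − ω_max) < ½. -/

import Mathlib

open Matrix
open scoped ComplexOrder

noncomputable section

variable {N : ℕ}

/-- A real matrix viewed as a complex matrix. -/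
def cm (M : Matrix (Fin N) (Fin N) ℝ) : Matrix (Fin N) (Fin N) ℂ :=
  M.map Complex.ofReal

/-- The quadratic matrix pencil `C(ζ,β) = ζ²α + iζ(2θ + βR) − η`. -/
def pencil (α η θ R : Matrix (Fin N) (Fin N) ℝ) (β : ℝ) (ζ : ℂ) :
    Matrix (Fin N) (Fin N) ℂ :=
  ζ ^ 2 • cm α + (Complex.I * ζ) • ((2 : ℂ) • cm θ + (β : ℂ) • cm R) - cm η

/-- `K_p = (√α)⁻¹`. -/
def Kp {α : Matrix (Fin N) (Fin N) ℝ} (hα : (cm α).PosDef) : Matrix (Fin N) (Fin N) ℂ :=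
  (hα.posSemidef.1.eigenvectorUnitary.1 *
    diagonal ((↑) ∘ Real.sqrt ∘ hα.posSemidef.1.eigenvalues) *
    (star hα.posSemidef.1.eigenvectorUnitary : Matrix (Fin N) (Fin N) ℂ))⁻¹

/-- `Φ = √η · K_p`. -/
def Phi {α η : Matrix (Fin N) (Fin N) ℝ} (hα : (cm α).PosDef) (hη : (cm η).PosSemidef) :
    Matrix (Fin N) (Fin N) ℂ :=
  (hη.1.eigenvectorUnitary.1 * diagonal ((↑) ∘ Real.sqrt ∘ hη.1.eigenvalues) *
    (star hη.1.eigenvectorUnitary : Matrix (Fin N) (Fin N) ℂ)) * Kp hα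

/-- `R̃ = K_p R K_p`. -/
def Rt (R : Matrix (Fin N) (Fin N) ℝ) {α : Matrix (Fin N) (Fin N) ℝ} (hα : (cm α).PosDef) :
    Matrix (Fin N) (Fin N) ℂ :=
  Kp hα * cm R * Kp hα

/-- `Ω_p = −2i K_p θ K_p`. -/
def Omp (θ : Matrix (Fin N) (Fin N) ℝ) {α : Matrix (Fin N) (Fin N) ℝ} (hα : (cm α).PosDef) :
    Matrix (Fin N) (Fin N) ℂ :=
  ((-2 : ℂ) * Complex.I) • (Kp hα * cm θ * Kp hα)

/-- `Ω = [[Ω_p, −iΦᵀ],[iΦ, 0]]`. -/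
def Om (θ : Matrix (Fin N) (Fin N) ℝ) {α η : Matrix (Fin N) (Fin N) ℝ}
    (hα : (cm α).PosDef) (hη : (cm η).PosSemidef) :
    Matrix (Fin N ⊕ Fin N) (Fin N ⊕ Fin N) ℂ :=
  fromBlocks (Omp θ hα) ((-Complex.I) • (Phi hα hη)ᵀ) (Complex.I • Phi hα hη) 0

/-- `B = [[R̃, 0],[0, 0]]`. -/
def Bm (R : Matrix (Fin N) (Fin N) ℝ) {α : Matrix (Fin N) (Fin N) ℝ} (hα : (cm α).PosDef) :
    Matrix (Fin N ⊕ Fin N) (Fin N ⊕ Fin N) ℂ :=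
  fromBlocks (Rt R hα) 0 0 0

/-- The system operator `A(β) = Ω − iβB`. -/
def Asys (θ R : Matrix (Fin N) (Fin N) ℝ) {α η : Matrix (Fin N) (Fin N) ℝ}
    (hα : (cm α).PosDef) (hη : (cm η).PosSemidef) (β : ℝ) :
    Matrix (Fin N ⊕ Fin N) (Fin N ⊕ Fin N) ℂ :=
  Om θ hα hη - (Complex.I * (β : ℂ)) • Bm R hα

/-- The ℓ²→ℓ² operator norm of a complex matrix. -/
def opN {n : Type*} [Fintype n] [DecidableEq n] (M : Matrix n n ℂ) : ℝ :=
  ‖Matrix.toEuclideanCLM (𝕜 := ℂ) M‖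

/-- `ω_max = ‖Ω‖`. -/
def omegaMax (θ : Matrix (Fin N) (Fin N) ℝ) {α η : Matrix (Fin N) (Fin N) ℝ}
    (hα : (cm α).PosDef) (hη : (cm η).PosSemidef) : ℝ :=
  opN (Om θ hα hη)

/-- `b_min`, the smallest nonzero eigenvalue of `B`. -/
def bMin (R : Matrix (Fin N) (Fin N) ℝ) {α : Matrix (Fin N) (Fin N) ℝ} (hα : (cm α).PosDef) : ℝ :=
  sInf {r : ℝ | r ≠ 0 ∧ (r : ℂ) ∈ spectrum ℂ (Bm R hα)}

/-!
If `A(β) v = ζ v` with `v ≠ 0`, then `Ω v = (ζ + iβB) v`. Expanding `v` in an orthonormal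
eigenbasis of the Hermitian matrix `B` gives `‖(ζ + iβB) v‖ ≥ minᵢ |ζ + iβμᵢ| ‖v‖`, so some
eigenvalue `μ` of `B` satisfies `|ζ + iβμ| ≤ ‖Ω‖ = ω_max` (a Bauer–Fike bound). Since `βμ` is real,
this gives `|Re ζ| ≤ ω_max` and `|Im ζ + βμ| ≤ ω_max`. Either `μ ≤ 0`, and then `−Im ζ ≤ ω_max`,
or `μ` is a nonzero eigenvalue, so `μ ≥ b_min` and `−Im ζ ≥ β b_min − ω_max`. The bound on `Q`
then only uses `|Re ζ| ≤ ω_max`.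
-/

namespace Matrix

variable {n : Type*} [Fintype n] [DecidableEq n]

lemma exists_mulVec_eq_smul_of_mem_spectrum {M : Matrix n n ℂ} {ζ : ℂ}
    (hζ : ζ ∈ spectrum ℂ M) : ∃ v ≠ 0, M *ᵥ v = ζ • v := by
  rw [← spectrum_toLin', ← Module.End.hasEigenvalue_iff_mem_spectrum] at hζ
  obtain ⟨v, hv⟩ := hζ.exists_hasEigenvector
  exact ⟨v, hv.2, by simpa using hv.apply_eq_smul⟩

lemma IsHermitian.eigenvectorBasis_repr_mulVec {B : Matrix n n ℂ} (hB : B.IsHermitian)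
    (x : n → ℂ) (i : n) :
    hB.eigenvectorBasis.repr (WithLp.toLp 2 (B *ᵥ x)) i =
      hB.eigenvalues i * hB.eigenvectorBasis.repr (WithLp.toLp 2 x) i := by
  simp only [OrthonormalBasis.repr_apply_apply, EuclideanSpace.inner_eq_star_dotProduct]
  have hstar : star ⇑(hB.eigenvectorBasis i) ᵥ* B = star (B *ᵥ ⇑(hB.eigenvectorBasis i)) := by
    rw [star_mulVec, hB.eq]
  rw [dotProduct_comm, dotProduct_mulVec, hstar, mulVec_eigenvectorBasis, star_smul,
    smul_dotProduct, dotProduct_comm x, RCLike.real_smul_eq_coe_smul (K := ℂ), star_trivial,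
    smul_eq_mul]
  rfl

lemma IsHermitian.exists_norm_add_mul_eigenvalues_mul_le [Nonempty n] {B : Matrix n n ℂ}
    (hB : B.IsHermitian) (a b : ℂ) (x : n → ℂ) :
    ∃ i, ‖a + b * hB.eigenvalues i‖ * ‖WithLp.toLp 2 x‖ ≤
      ‖WithLp.toLp 2 (a • x + b • B *ᵥ x)‖ := by
  obtain ⟨i₀, -, hmin⟩ := Finset.exists_min_image Finset.univ
    (fun i ↦ ‖a + b * hB.eigenvalues i‖) Finset.univ_nonempty
  refine ⟨i₀, ?_⟩
  set e := hB.eigenvectorBasis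
  have hrepr : ∀ i, e.repr (WithLp.toLp 2 (a • x + b • B *ᵥ x)) i =
      (a + b * hB.eigenvalues i) * e.repr (WithLp.toLp 2 x) i := by
    intro i
    rw [WithLp.toLp_add, WithLp.toLp_smul, WithLp.toLp_smul, map_add, map_smul, map_smul,
      PiLp.add_apply, PiLp.smul_apply, PiLp.smul_apply, hB.eigenvectorBasis_repr_mulVec]
    simp only [smul_eq_mul]
    ring
  rw [← e.repr.norm_map (WithLp.toLp 2 x),
    ← e.repr.norm_map (WithLp.toLp 2 (a • x + b • B *ᵥ x))]
  refine pow_le_pow_iff_left₀ (by positivity) (norm_nonneg _) two_ne_zero |>.mp ?_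
  rw [mul_pow, EuclideanSpace.norm_sq_eq, EuclideanSpace.norm_sq_eq, Finset.mul_sum]
  simp only [hrepr, norm_mul, mul_pow]
  gcongr with i
  exact hmin i (Finset.mem_univ i)

theorem IsHermitian.exists_norm_add_mul_eigenvalues_le_opN {W B : Matrix n n ℂ}
    (hB : B.IsHermitian) (c : ℂ) {ζ : ℂ} (hζ : ζ ∈ spectrum ℂ (W - c • B)) :
    ∃ i, ‖ζ + c * hB.eigenvalues i‖ ≤ opN W := by
  obtain ⟨v, hv, hWv⟩ := exists_mulVec_eq_smul_of_mem_spectrum hζ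
  rw [sub_mulVec, smul_mulVec, sub_eq_iff_eq_add] at hWv
  have : Nonempty n := (Function.ne_iff.mp hv).nonempty
  obtain ⟨i, hi⟩ := hB.exists_norm_add_mul_eigenvalues_mul_le ζ c v
  refine ⟨i, le_of_mul_le_mul_right ?_ (norm_pos_iff.mpr ((WithLp.toLp_eq_zero 2).not.mpr hv))⟩
  calc ‖ζ + c * hB.eigenvalues i‖ * ‖WithLp.toLp 2 v‖
      ≤ ‖WithLp.toLp 2 (W *ᵥ v)‖ := by rwa [hWv]
    _ = ‖toEuclideanCLM (𝕜 := ℂ) W (WithLp.toLp 2 v)‖ := rfl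
    _ ≤ opN W * ‖WithLp.toLp 2 v‖ := (toEuclideanCLM (𝕜 := ℂ) W).le_opNorm _

-- `bMin R hα` unfolds to `sInf (nonzeroRealSpectrum (Bm R hα))`.
def nonzeroRealSpectrum (B : Matrix n n ℂ) : Set ℝ := {r | r ≠ 0 ∧ (r : ℂ) ∈ spectrum ℂ B}

lemma IsHermitian.mem_nonzeroRealSpectrum_iff {B : Matrix n n ℂ} (hB : B.IsHermitian) {r : ℝ} :
    r ∈ nonzeroRealSpectrum B ↔ r ≠ 0 ∧ r ∈ Set.range hB.eigenvalues := by
  simp [nonzeroRealSpectrum, hB.spectrum_eq_image_range]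

lemma finite_nonzeroRealSpectrum (B : Matrix n n ℂ) : (nonzeroRealSpectrum B).Finite :=
  (B.finite_spectrum.preimage Complex.ofReal_injective.injOn).subset fun _ hr ↦ hr.2

lemma IsHermitian.sInf_nonzeroRealSpectrum_le {B : Matrix n n ℂ} (hB : B.IsHermitian) {i : n}
    (hi : hB.eigenvalues i ≠ 0) : sInf (nonzeroRealSpectrum B) ≤ hB.eigenvalues i :=
  csInf_le (finite_nonzeroRealSpectrum B).bddBelow
    (hB.mem_nonzeroRealSpectrum_iff.mpr ⟨hi, i, rfl⟩)

lemma PosSemidef.sInf_nonzeroRealSpectrum_pos {B : Matrix n n ℂ} (hB : B.PosSemidef)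
    (hB0 : B ≠ 0) : 0 < sInf (nonzeroRealSpectrum B) := by
  have hne : (nonzeroRealSpectrum B).Nonempty := by
    obtain ⟨i, hi⟩ := Function.ne_iff.mp (mt hB.1.eigenvalues_eq_zero_iff.mp hB0)
    exact ⟨_, hB.1.mem_nonzeroRealSpectrum_iff.mpr ⟨hi, i, rfl⟩⟩
  obtain ⟨hr0, i, hi⟩ :=
    hB.1.mem_nonzeroRealSpectrum_iff.mp (hne.csInf_mem (finite_nonzeroRealSpectrum B))
  exact hi ▸ (hB.eigenvalues_nonneg i).lt_of_ne (hi ▸ hr0).symm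

lemma IsHermitian.abs_re_le_opN_of_mem_spectrum {W B : Matrix n n ℂ} (hB : B.IsHermitian)
    (β : ℝ) {ζ : ℂ} (hζ : ζ ∈ spectrum ℂ (W - (Complex.I * β) • B)) : |ζ.re| ≤ opN W := by
  obtain ⟨i, hi⟩ := hB.exists_norm_add_mul_eigenvalues_le_opN _ hζ
  calc |ζ.re| = |(ζ + Complex.I * β * hB.eigenvalues i).re| := by simp
    _ ≤ opN W := (Complex.abs_re_le_norm _).trans hi

lemma IsHermitian.neg_im_le_or_le_of_mem_spectrum {W B : Matrix n n ℂ} (hB : B.IsHermitian)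
    {β : ℝ} (hβ : 0 ≤ β) {ζ : ℂ} (hζ : ζ ∈ spectrum ℂ (W - (Complex.I * β) • B)) :
    -ζ.im ≤ opN W ∨ β * sInf (nonzeroRealSpectrum B) - opN W ≤ -ζ.im := by
  obtain ⟨i, hi⟩ := hB.exists_norm_add_mul_eigenvalues_le_opN _ hζ
  have him : |ζ.im + β * hB.eigenvalues i| ≤ opN W := by
    simpa using (Complex.abs_im_le_norm _).trans hi
  rcases abs_le.mp him with ⟨hlow, hup⟩
  rcases le_or_gt (hB.eigenvalues i) 0 with hμ | hμ
  · left
    nlinarith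
  · right
    have := hB.sInf_nonzeroRealSpectrum_le hμ.ne'
    nlinarith

end Matrix

lemma Matrix.PosSemidef.fromBlocks_zero {m n R : Type*} [Fintype m] [Fintype n] [DecidableEq m]
    [Ring R] [PartialOrder R] [StarRing R] {A : Matrix m m R} (hA : A.PosSemidef) :
    (fromBlocks A 0 0 (0 : Matrix n n R)).PosSemidef := by
  convert hA.conjTranspose_mul_mul_same (fromCols (1 : Matrix m m R) (0 : Matrix m n R)) using 1
  rw [conjTranspose_fromCols_eq_fromRows_conjTranspose, fromRows_mul, fromRows_mul_fromCols]
  simp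

section Loss

variable {α R : Matrix (Fin N) (Fin N) ℝ} (hα : (cm α).PosDef)

lemma Kp_eq_inv_conj : Kp hα = (Unitary.conjStarAlgAut ℂ _ hα.posSemidef.1.eigenvectorUnitary
    (diagonal ((↑) ∘ Real.sqrt ∘ hα.posSemidef.1.eigenvalues)))⁻¹ := rfl

lemma Kp_isHermitian : (Kp hα).IsHermitian := by
  rw [Kp_eq_inv_conj]
  refine IsHermitian.inv (IsSelfAdjoint.map ?_ _)
  exact isHermitian_diagonal_of_self_adjoint _ (funext fun _ ↦ Complex.conj_ofReal _)

lemma Kp_isUnit : IsUnit (Kp hα) := by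
  rw [Kp_eq_inv_conj, isUnit_nonsing_inv_iff, MulEquiv.isUnit_map, isUnit_diagonal,
    Pi.isUnit_iff]
  intro i
  simpa using (Real.sqrt_pos.mpr (hα.eigenvalues_pos i)).ne'

lemma Bm_posSemidef (hR : (cm R).PosSemidef) : (Bm R hα).PosSemidef := by
  have hRt : (Rt R hα).PosSemidef := by
    simpa only [Rt, (Kp_isHermitian hα).eq] using hR.conjTranspose_mul_mul_same (Kp hα)
  exact hRt.fromBlocks_zero

lemma Bm_ne_zero (hR0 : R ≠ 0) : Bm R hα ≠ 0 := by
  have hK := Kp_isUnit hα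
  intro hB
  have hRt : Kp hα * cm R * Kp hα = 0 := congrArg toBlocks₁₁ hB
  rw [hK.mul_left_eq_zero, hK.mul_right_eq_zero] at hRt
  exact hR0 (map_injective Complex.ofReal_injective hRt)

end Loss

theorem high_loss_dissipative_properties_general
    {N : ℕ}
    (α η θ R : Matrix (Fin N) (Fin N) ℝ)
    (hα : (cm α).PosDef) (hη : (cm η).PosSemidef)
    (hR : (cm R).PosSemidef) (hR0 : R ≠ 0)
    (β : ℝ) (hβ : 2 * omegaMax θ hα hη / bMin R hα < β) :
    (∀ ζ ∈ spectrum ℂ (Asys θ R hα hη β),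
      -ζ.im ≤ omegaMax θ hα hη ∨ β * bMin R hα - omegaMax θ hα hη ≤ -ζ.im) ∧
    omegaMax θ hα hη < β * bMin R hα - omegaMax θ hα hη ∧
    (∀ ζ ∈ spectrum ℂ (Asys θ R hα hη β),
      β * bMin R hα - omegaMax θ hα hη ≤ -ζ.im →
        0 ≤ 1 / 2 * (|ζ.re| / -ζ.im) ∧
        1 / 2 * (|ζ.re| / -ζ.im) ≤
          1 / 2 * (omegaMax θ hα hη / (β * bMin R hα - omegaMax θ hα hη)) ∧
        1 / 2 * (omegaMax θ hα hη / (β * bMin R hα - omegaMax θ hα hη)) < 1 / 2) := by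
  have hB := Bm_posSemidef hα hR
  have hb : 0 < bMin R hα := hB.sInf_nonzeroRealSpectrum_pos (Bm_ne_zero hα hR0)
  have hω : 0 ≤ omegaMax θ hα hη := norm_nonneg _
  have hgap : 2 * omegaMax θ hα hη < β * bMin R hα := by rwa [div_lt_iff₀ hb] at hβ
  have hβ0 : 0 ≤ β := (div_nonneg (by positivity) hb.le).trans hβ.le
  refine ⟨fun ζ hζ ↦ hB.1.neg_im_le_or_le_of_mem_spectrum hβ0 hζ, by linarith,
    fun ζ hζ hhigh ↦ ?_⟩
  have hre : |ζ.re| ≤ omegaMax θ hα hη := hB.1.abs_re_le_opN_of_mem_spectrum β hζ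
  have him : 0 < -ζ.im := by linarith
  refine ⟨by positivity, by gcongr; linarith, ?_⟩
  have hQ : omegaMax θ hα hη / (β * bMin R hα - omegaMax θ hα hη) < 1 :=
    (div_lt_one (by linarith)).mpr (by linarith)
  linarith

/-- **Dissipative properties of the high-loss spectrum.** If `β > 2 ω_max / b_min` then every
`ζ ∈ σ(A(β))` has `−Im ζ ≤ ω_max` or `−Im ζ ≥ β b_min − ω_max`, with
`β b_min − ω_max > ω_max`; and for the high-loss eigenvalues the quality factor
`Q(ζ) = ½|Re ζ|/(−Im ζ)` satisfies `0 ≤ Q(ζ) ≤ ½ ω_max/(β b_min − ω_max) < ½`. -/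
theorem high_loss_dissipative_properties
    {N : ℕ} (hN : 1 ≤ N)
    (α η θ R : Matrix (Fin N) (Fin N) ℝ)
    (hα : (cm α).PosDef) (hη : (cm η).PosSemidef)
    (hθ : θᵀ = -θ) (hR : (cm R).PosSemidef) (hR0 : R ≠ 0)
    (β : ℝ) (hβ : 2 * omegaMax θ hα hη / bMin R hα < β) :
    (∀ ζ ∈ spectrum ℂ (Asys θ R hα hη β),
      -ζ.im ≤ omegaMax θ hα hη ∨ β * bMin R hα - omegaMax θ hα hη ≤ -ζ.im) ∧
    omegaMax θ hα hη < β * bMin R hα - omegaMax θ hα hη ∧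
    (∀ ζ ∈ spectrum ℂ (Asys θ R hα hη β),
      β * bMin R hα - omegaMax θ hα hη ≤ -ζ.im →
        0 ≤ 1 / 2 * (|ζ.re| / -ζ.im) ∧
        1 / 2 * (|ζ.re| / -ζ.im) ≤
          1 / 2 * (omegaMax θ hα hη / (β * bMin R hα - omegaMax θ hα hη)) ∧
        1 / 2 * (omegaMax θ hα hη / (β * bMin R hα - omegaMax θ hα hη)) < 1 / 2) :=
  high_loss_dissipative_properties_general α η θ R hα hη hR hR0 β hβ
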